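/- Let T=(V,p) be a directed forest and λ a system of weights on T. The weighted shift S_λ is a bounded operator on ℓ²(V) if and only if sup{ ∑_{u∈Chi(v)} |λ_u|² : v ∈ V } < ∞; and in that case ‖S_λ‖ = sup{ ‖S_λ e_v‖ : v ∈ V } = sup{ (∑_{u∈Chi(v)} |λ_u|²)^{1/2} : v ∈ V }. -/

import Mathlib

open scoped ENNReal Classical
noncomputable section

universe u

namespace ShiftsPaper

/-- ℓ²(V) over ℂ. -/
abbrev Hs (V : Type u) : Type u := lp (fun _ : V => ℂ) 2

/-- canonical orthonormal basis vector -/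
def ev {V : Type u} (v : V) : Hs V := lp.single 2 v 1

/-- A directed forest: a nonempty vertex set together with a parent function `p`
such that any vertex lying on a `p`-cycle is a fixed point of `p`. -/
def IsDirectedForest {V : Type u} (p : V → V) : Prop :=
  Nonempty V ∧ ∀ n : ℕ, 1 ≤ n → ∀ v : V, p^[n] v = v → p v = v

def rootSet {V : Type u} (p : V → V) : Set V := {v | p v = v}

def children {V : Type u} (p : V → V) (v : V) : Set V := {u | p u = v ∧ u ≠ v}

/-- the set of `k`-th children `Chi^⟨k⟩(v)` -/
def childrenIter {V : Type u} (p : V → V) : ℕ → V → Set V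
  | 0, v => {v}
  | k + 1, v => {u | p^[k + 1] u = v ∧ p^[k] u ≠ v}

/-- descendants -/
def des {V : Type u} (p : V → V) (v : V) : Set V := ⋃ n : ℕ, childrenIter p n v

lemma self_mem_des {V : Type u} (p : V → V) (v : V) : v ∈ des p v :=
  Set.mem_iUnion.2 ⟨0, by simp [childrenIter]⟩

/-- `u` and `v` belong to the same tree (connected component) of the forest -/
def sameTree {V : Type u} (p : V → V) (u v : V) : Prop :=
  ∃ m n : ℕ, p^[m] u = p^[n] v

/-- A directed tree is a connected directed forest. -/
def IsDirectedTree {V : Type u} (p : V → V) : Prop :=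
  IsDirectedForest p ∧ ∀ u v : V, sameTree p u v

def Leafless {V : Type u} (p : V → V) : Prop := Function.Surjective p

def LocallyCountable {V : Type u} (p : V → V) : Prop :=
  ∀ v : V, (children p v).Countable

/-- every non-root vertex has exactly one child -/
def Forkless {V : Type u} (p : V → V) : Prop :=
  ∀ v : V, p v ≠ v → ∃! u : V, u ∈ children p v

/-- a system of weights: vanishing at the roots -/
def WeightSystem {V : Type u} (p : V → V) (lam : V → ℂ) : Prop :=
  ∀ v : V, p v = v → lam v = 0

/-- a proper system of weights: vanishing exactly at the roots -/
def ProperWeights {V : Type u} (p : V → V) (lam : V → ℂ) : Prop :=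
  ∀ v : V, lam v = 0 ↔ p v = v

/-- `S` is the (bounded) weighted shift on the forest `(V, p)` with weights `lam`:
`(S f)(v) = lam v • f (p v)`. -/
def IsWeightedShift {V : Type u} (p : V → V) (lam : V → ℂ)
    (S : Hs V →L[ℂ] Hs V) : Prop :=
  ∀ (f : Hs V) (v : V), (S f : ∀ _ : V, ℂ) v = lam v * (f : ∀ _ : V, ℂ) (p v)

def Hyponormal {E : Type u} [NormedAddCommGroup E] [InnerProductSpace ℂ E]
    [CompleteSpace E] (A : E →L[ℂ] E) : Prop :=
  (ContinuousLinearMap.adjoint A ∘L A - A ∘L ContinuousLinearMap.adjoint A).IsPositive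

def PowerHyponormal {E : Type u} [NormedAddCommGroup E] [InnerProductSpace ℂ E]
    [CompleteSpace E] (A : E →L[ℂ] E) : Prop :=
  ∀ n : ℕ, 1 ≤ n → Hyponormal (A ^ n)

/-- `A` is subnormal: it is the restriction of a bounded normal operator on a larger
Hilbert space to an invariant subspace. -/
def Subnormal {E : Type u} [NormedAddCommGroup E] [InnerProductSpace ℂ E]
    [CompleteSpace E] (A : E →L[ℂ] E) : Prop :=
  ∃ (K : Type u) (_ : NormedAddCommGroup K) (_ : InnerProductSpace ℂ K)
    (_ : CompleteSpace K) (J : E →ₗᵢ[ℂ] K) (N : K →L[ℂ] K),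
    IsStarNormal N ∧ ∀ x : E, N (J x) = J (A x)

/-- `μ` is a representing measure (a positive Borel measure on `[0,∞)`) for the
sequence `a`. -/
def IsRepresentingMeasure (μ : MeasureTheory.Measure ℝ) (a : ℕ → ℝ) : Prop :=
  μ (Set.Iio 0) = 0 ∧
    ∀ n : ℕ, ENNReal.ofReal (a n) = ∫⁻ x : ℝ, ENNReal.ofReal (x ^ n) ∂μ

def IsStieltjesMomentSeq (a : ℕ → ℝ) : Prop :=
  (∀ n, 0 ≤ a n) ∧ ∃ μ : MeasureTheory.Measure ℝ, IsRepresentingMeasure μ a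

/-- parent function of the `k`-step backward extension `T⟨k⟩`; the new vertices
`ω_1, …, ω_k` are encoded as `Sum.inr ⟨0⟩, …, Sum.inr ⟨k-1⟩`. -/
def extParent {V : Type u} (p : V → V) (ω : V) (k : ℕ) :
    V ⊕ Fin k → V ⊕ Fin k
  | Sum.inl v =>
      if v = ω then (if h : 0 < k then Sum.inr ⟨0, h⟩ else Sum.inl ω)
      else Sum.inl (p v)
  | Sum.inr j =>
      if h : (j : ℕ) + 1 < k then Sum.inr ⟨(j : ℕ) + 1, h⟩ else Sum.inr j

/-- weights on `T⟨k⟩`: weight `mu 0 = λ'_{ω_0}` at the old root `ω`, weight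
`mu (j+1) = λ'_{ω_{j+1}}` at `ω_{j+1}` for `j+1 < k`, weight `0` at the new root `ω_k`. -/
def extWeights {V : Type u} (lam : V → ℂ) (ω : V) (k : ℕ) (mu : Fin k → ℂ) :
    V ⊕ Fin k → ℂ
  | Sum.inl v => if v = ω then (if h : 0 < k then mu ⟨0, h⟩ else 0) else lam v
  | Sum.inr j => if h : (j : ℕ) + 1 < k then mu ⟨(j : ℕ) + 1, h⟩ else 0

/-- `S` (the weighted shift with weights `lam` on a tree rooted at `ω`) admits a
subnormal `k`-step backward extension. -/
def AdmitsSubnormalBackExt {V : Type u} (p : V → V) (lam : V → ℂ) (ω : V)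
    (S : Hs V →L[ℂ] Hs V) (k : ℕ) : Prop :=
  Subnormal S ∧
    ∃ mu : Fin k → ℂ, (∀ j, mu j ≠ 0) ∧
      ∃ S' : Hs (V ⊕ Fin k) →L[ℂ] Hs (V ⊕ Fin k),
        IsWeightedShift (extParent p ω k) (extWeights lam ω k mu) S' ∧ Subnormal S'

def AdmitsPowerHypoBackExt {V : Type u} (p : V → V) (lam : V → ℂ) (ω : V)
    (S : Hs V →L[ℂ] Hs V) (k : ℕ) : Prop :=
  PowerHyponormal S ∧
    ∃ mu : Fin k → ℂ, (∀ j, mu j ≠ 0) ∧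
      ∃ S' : Hs (V ⊕ Fin k) →L[ℂ] Hs (V ⊕ Fin k),
        IsWeightedShift (extParent p ω k) (extWeights lam ω k mu) S' ∧
        PowerHyponormal S'

/-- the parent function of the subforest `T|_W`. -/
def restrictParent {V : Type u} (p : V → V) (W : Set V) : W → W :=
  fun v => if h : p ↑v ∈ W then ⟨p ↑v, h⟩ else v

/-- the weights `λ→_u` on the subtree `T_(u→)` of descendants of `u`. -/
def subWeights {V : Type u} (lam : V → ℂ) (u : V) (W : Set V) : W → ℂ :=
  fun v => if (v : V) = u then 0 else lam ↑v

/-- parent function of the rooted sum of the family `{(V j, p j)}` with roots `ω j`;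
the new root is `none`. -/
def rsParent {J : Type u} {V : J → Type u} (p : ∀ j, V j → V j) (ω : ∀ j, V j) :
    Option (Σ j, V j) → Option (Σ j, V j)
  | none => none
  | some ⟨j, v⟩ => if v = ω j then none else some ⟨j, p j v⟩

/-- weights on the rooted sum: `0` at the new root, `θ j` at the old root `ω j`. -/
def rsWeights {J : Type u} {V : J → Type u} (lam : ∀ j, V j → ℂ) (ω : ∀ j, V j)
    (θ : J → ℂ) : Option (Σ j, V j) → ℂ
  | none => 0
  | some ⟨j, v⟩ => if v = ω j then θ j else lam j v

/-- iterated weights `λ^(k)_v`. -/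
def iterWeight {V : Type u} (p : V → V) (lam : V → ℂ) : ℕ → V → ℂ
  | 0, _ => 1
  | k + 1, v => iterWeight p lam k (p v) * lam v

/-- parent function `p^[k]` of the `k`-th power forest `T^k`. -/
def kPowParent {V : Type u} (p : V → V) (k : ℕ) (v : V) : V :=
  if p (p^[k - 1] v) = p^[k - 1] v then v else p^[k] v


section AuxShift

variable {V : Type u}

/-- ℓ² "energy" of a function, valued in `ℝ≥0∞`. -/
private def en (g : V → ℂ) : ℝ≥0∞ := ∑' v, (‖g v‖₊ : ℝ≥0∞) ^ 2

private lemma en_eq (f : Hs V) :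
    en (fun v => (f : ∀ _ : V, ℂ) v) = ENNReal.ofReal (‖f‖ ^ 2) := by
  have hp : 0 < (2 : ℝ≥0∞).toReal := by norm_num
  have h2 : (2 : ℝ≥0∞).toReal = ((2 : ℕ) : ℝ) := by norm_num
  have hsum := (lp.memℓp f).summable hp
  have hnorm := lp.norm_rpow_eq_tsum hp f
  rw [h2] at hsum hnorm
  simp only [Real.rpow_natCast] at hsum hnorm
  rw [en, hnorm, ENNReal.ofReal_tsum_of_nonneg (fun v => by positivity) hsum]
  refine tsum_congr fun v => ?_
  rw [ENNReal.ofReal_pow (norm_nonneg _), ofReal_norm, enorm_eq_nnnorm]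

private lemma memℓp_of_en_ne_top (g : V → ℂ) (h : en g ≠ ⊤) : Memℓp g 2 := by
  apply memℓp_gen
  have h2 : (2 : ℝ≥0∞).toReal = ((2 : ℕ) : ℝ) := by norm_num
  rw [h2]
  simp only [Real.rpow_natCast]
  have hsum : Summable fun v => (‖g v‖₊ ^ 2 : NNReal) := by
    rw [← ENNReal.tsum_coe_ne_top_iff_summable]
    simpa [en, ENNReal.coe_pow] using h
  have := NNReal.summable_coe.2 hsum
  simpa using this

/-- the fiberwise decomposition of a `tsum` over `V` along `p`. -/
private lemma tsum_fiber (p : V → V) (F : V → ℝ≥0∞) :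
    ∑' v, F v = ∑' w, ∑' v : ↥(p ⁻¹' {w}), F ↑v := by
  rw [← (Equiv.sigmaFiberEquiv p).tsum_eq F]
  exact ENNReal.tsum_sigma' _

private lemma c_eq_fiber {p : V → V} {lam : V → ℂ} (hw : WeightSystem p lam) (w : V) :
    (∑' v : ↥(p ⁻¹' {w}), ((‖lam ↑v‖₊ : ℝ≥0∞) ^ 2)) =
      ∑' u : ↥(children p w), ((‖lam ↑u‖₊ : ℝ≥0∞) ^ 2) := by
  rw [tsum_subtype (p ⁻¹' {w}) (fun v => ((‖lam v‖₊ : ℝ≥0∞) ^ 2)),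
    tsum_subtype (children p w) (fun v => ((‖lam v‖₊ : ℝ≥0∞) ^ 2))]
  refine tsum_congr fun v => ?_
  by_cases hv : p v = w
  · by_cases hvw : v = w
    · subst hvw
      have : lam v = 0 := hw v hv
      simp [Set.indicator, children, this]
    · simp [Set.indicator, Set.mem_preimage, children, hv, hvw]
  · simp [Set.indicator, Set.mem_preimage, children, hv]

private lemma en_shift {p : V → V} {lam : V → ℂ} (hw : WeightSystem p lam) (f : V → ℂ) :
    en (fun v => lam v * f (p v)) =
      ∑' w, (∑' u : ↥(children p w), ((‖lam ↑u‖₊ : ℝ≥0∞) ^ 2)) * (‖f w‖₊ : ℝ≥0∞) ^ 2 := by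
  have h1 : en (fun v => lam v * f (p v)) =
      ∑' v, ((‖lam v‖₊ : ℝ≥0∞) ^ 2) * (‖f (p v)‖₊ : ℝ≥0∞) ^ 2 := by
    refine tsum_congr fun v => ?_
    rw [nnnorm_mul]
    push_cast
    ring
  rw [h1, tsum_fiber p (fun v => ((‖lam v‖₊ : ℝ≥0∞) ^ 2) * (‖f (p v)‖₊ : ℝ≥0∞) ^ 2)]
  refine tsum_congr fun w => ?_
  have h2 : ∀ v : ↥(p ⁻¹' {w}),
      ((‖lam ↑v‖₊ : ℝ≥0∞) ^ 2) * (‖f (p ↑v)‖₊ : ℝ≥0∞) ^ 2 =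
        ((‖lam ↑v‖₊ : ℝ≥0∞) ^ 2) * (‖f w‖₊ : ℝ≥0∞) ^ 2 := fun v => by
    have : p ↑v = w := v.2
    rw [this]
  rw [tsum_congr h2, ENNReal.tsum_mul_right, c_eq_fiber hw]

private lemma ev_apply (v w : V) :
    (ev v : ∀ _ : V, ℂ) w = if w = v then 1 else 0 := by
  rcases eq_or_ne w v with h | h
  · subst h; simp [ev, lp.single_apply_self]
  · simp [ev, lp.single_apply_ne _ _ _ h, h]

private lemma norm_ev (v : V) : ‖(ev v : Hs V)‖ = 1 := by
  have hp : 0 < (2 : ℝ≥0∞).toReal := by norm_num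
  have := lp.norm_single (E := fun _ : V => ℂ) (p := 2) (by norm_num) v (1 : ℂ)
  simpa [ev] using this

private lemma en_shift_ev {p : V → V} {lam : V → ℂ} (hw : WeightSystem p lam)
    {S : Hs V →L[ℂ] Hs V} (hS : IsWeightedShift p lam S) (v : V) :
    ENNReal.ofReal (‖S (ev v)‖ ^ 2) =
      ∑' u : ↥(children p v), ((‖lam ↑u‖₊ : ℝ≥0∞) ^ 2) := by
  rw [← en_eq (S (ev v))]
  have hcoe : (fun u => (S (ev v) : ∀ _ : V, ℂ) u) =
      fun u => lam u * (ev v : ∀ _ : V, ℂ) (p u) := funext fun u => hS (ev v) u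
  rw [hcoe]
  have h1 : (fun u => lam u * (ev v : ∀ _ : V, ℂ) (p u)) =
      fun u => lam u * (fun w => if w = v then (1 : ℂ) else 0) (p u) := by
    funext u; rw [ev_apply]
  have h3 := en_shift hw (fun w => if w = v then (1 : ℂ) else 0)
  rw [h1, h3]
  have h2 : ∀ w, (‖(fun w => if w = v then (1 : ℂ) else 0) w‖₊ : ℝ≥0∞) ^ 2 =
      if w = v then 1 else 0 := fun w => by
    rcases eq_or_ne w v with h | h <;> simp [h]
  calc ∑' w, (∑' u : ↥(children p w), ((‖lam ↑u‖₊ : ℝ≥0∞) ^ 2)) *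
        (‖(fun w => if w = v then (1 : ℂ) else 0) w‖₊ : ℝ≥0∞) ^ 2
      = ∑' w, (∑' u : ↥(children p w), ((‖lam ↑u‖₊ : ℝ≥0∞) ^ 2)) *
          (if w = v then 1 else 0) := by
        refine tsum_congr fun w => ?_; rw [h2]
    _ = ∑' u : ↥(children p v), ((‖lam ↑u‖₊ : ℝ≥0∞) ^ 2) := by
        rw [tsum_eq_single v (fun w hwv => by simp [hwv])]
        simp

end AuxShift

/-- Proposition (shift-basic, boundedness): the weighted shift with weights `lam` on a
directed forest extends to a bounded operator on `ℓ²(V)` iff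
`sup_v ∑_{u ∈ Chi(v)} |λ_u|² < ∞`, and in that case
`‖S‖ = sup_v ‖S e_v‖ = sup_v (∑_{u ∈ Chi(v)} |λ_u|²)^{1/2}`. -/

theorem shiftBounded {V : Type u} (p : V → V) (hforest : IsDirectedForest p)
    (lam : V → ℂ) (hw : WeightSystem p lam) :
    ((∃ S : Hs V →L[ℂ] Hs V, IsWeightedShift p lam S) ↔
      (⨆ v : V, ∑' u : ↥(children p v), ((‖lam ↑u‖₊ : ℝ≥0∞) ^ 2)) < ⊤) ∧
    (∀ S : Hs V →L[ℂ] Hs V, IsWeightedShift p lam S →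
      (‖S‖ = ⨆ v : V, ‖S (ev v)‖) ∧
      ENNReal.ofReal (‖S‖ ^ 2) =
        ⨆ v : V, ∑' u : ↥(children p v), ((‖lam ↑u‖₊ : ℝ≥0∞) ^ 2)) := by
  obtain ⟨hne, -⟩ := hforest
  obtain ⟨v0⟩ := hne
  haveI : Nonempty V := ⟨v0⟩
  set c : V → ℝ≥0∞ := fun w => ∑' u : ↥(children p w), ((‖lam ↑u‖₊ : ℝ≥0∞) ^ 2) with hc
  set M : ℝ≥0∞ := ⨆ v, c v with hM
  have key : ∀ (S : Hs V →L[ℂ] Hs V), IsWeightedShift p lam S → ∀ v,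
      ENNReal.ofReal (‖S (ev v)‖ ^ 2) = c v := fun S hS v => en_shift_ev hw hS v
  have fwd : ∀ (S : Hs V →L[ℂ] Hs V), IsWeightedShift p lam S →
      M ≤ ENNReal.ofReal (‖S‖ ^ 2) := by
    intro S hS
    refine iSup_le fun v => ?_
    rw [← key S hS v]
    apply ENNReal.ofReal_le_ofReal
    have h1 : ‖S (ev v)‖ ≤ ‖S‖ := by
      have := S.le_opNorm (ev v)
      rwa [norm_ev, mul_one] at this
    exact pow_le_pow_left₀ (norm_nonneg _) h1 2
  have hen : ∀ f : Hs V, en (fun v => lam v * (f : ∀ _ : V, ℂ) (p v)) ≤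
      M * ENNReal.ofReal (‖f‖ ^ 2) := by
    intro f
    rw [en_shift hw, ← en_eq f, en]
    calc ∑' w, c w * ((‖(f : ∀ _ : V, ℂ) w‖₊ : ℝ≥0∞) ^ 2)
        ≤ ∑' w, M * ((‖(f : ∀ _ : V, ℂ) w‖₊ : ℝ≥0∞) ^ 2) :=
          ENNReal.tsum_le_tsum fun w => mul_le_mul_left (le_iSup c w) _
      _ = M * ∑' w, ((‖(f : ∀ _ : V, ℂ) w‖₊ : ℝ≥0∞) ^ 2) := ENNReal.tsum_mul_left
  have sq_le : ∀ a b : ℝ, 0 ≤ a → 0 ≤ b →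
      ENNReal.ofReal (a ^ 2) ≤ ENNReal.ofReal (b ^ 2) → a ≤ b := by
    intro a b ha hb h
    have := (ENNReal.ofReal_le_ofReal_iff (by positivity)).1 h
    exact (pow_le_pow_iff_left₀ ha hb two_ne_zero).1 this
  constructor
  · constructor
    · rintro ⟨S, hS⟩
      exact lt_of_le_of_lt (fwd S hS) ENNReal.ofReal_lt_top
    · intro hMlt
      have hmem : ∀ f : Hs V, Memℓp (fun v => lam v * (f : ∀ _ : V, ℂ) (p v)) 2 := by
        intro f
        refine memℓp_of_en_ne_top _ ?_
        exact ne_top_of_le_ne_top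
          (ENNReal.mul_ne_top hMlt.ne ENNReal.ofReal_ne_top) (hen f)
      let L : Hs V →ₗ[ℂ] Hs V :=
        { toFun := fun f => ⟨fun v => lam v * (f : ∀ _ : V, ℂ) (p v), hmem f⟩
          map_add' := fun f g => by
            apply lp.ext
            funext v
            simp only [lp.coeFn_add, Pi.add_apply]
            exact mul_add _ _ _
          map_smul' := fun a f => by
            apply lp.ext
            funext v
            simp only [lp.coeFn_smul, Pi.smul_apply, smul_eq_mul, RingHom.id_apply]
            ring }
      have hMne : M ≠ ⊤ := hMlt.ne
      have hbound : ∀ f : Hs V, ‖L f‖ ≤ Real.sqrt M.toReal * ‖f‖ := by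
        intro f
        refine sq_le _ _ (norm_nonneg _) (by positivity) ?_
        have h1 : ENNReal.ofReal (‖L f‖ ^ 2) = en (fun v => lam v * (f : ∀ _ : V, ℂ) (p v)) :=
          (en_eq (L f)).symm
        rw [h1]
        refine le_trans (hen f) ?_
        rw [← ENNReal.ofReal_toReal hMne,
          ← ENNReal.ofReal_mul ENNReal.toReal_nonneg]
        apply ENNReal.ofReal_le_ofReal
        rw [mul_pow, Real.sq_sqrt ENNReal.toReal_nonneg,
          ENNReal.toReal_ofReal ENNReal.toReal_nonneg]
      refine ⟨L.mkContinuous _ hbound, fun f v => rfl⟩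
  · intro S hS
    have hbddA : BddAbove (Set.range fun v => ‖S (ev v)‖) := by
      refine ⟨‖S‖, ?_⟩
      rintro - ⟨v, rfl⟩
      have := S.le_opNorm (ev v)
      rwa [norm_ev, mul_one] at this
    set N : ℝ := ⨆ v, ‖S (ev v)‖ with hN
    have hNle : ∀ v, ‖S (ev v)‖ ≤ N := fun v => le_ciSup hbddA v
    have hN0 : 0 ≤ N := le_trans (norm_nonneg _) (hNle v0)
    have hMN : M ≤ ENNReal.ofReal (N ^ 2) := by
      refine iSup_le fun v => ?_
      rw [← key S hS v]
      exact ENNReal.ofReal_le_ofReal (pow_le_pow_left₀ (norm_nonneg _) (hNle v) 2)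
    have hSle : ∀ f : Hs V, ‖S f‖ ≤ N * ‖f‖ := by
      intro f
      refine sq_le _ _ (norm_nonneg _) (by positivity) ?_
      have hcoe : (fun v => (S f : ∀ _ : V, ℂ) v) =
          fun v => lam v * (f : ∀ _ : V, ℂ) (p v) := funext (hS f)
      have h1 : ENNReal.ofReal (‖S f‖ ^ 2) =
          en (fun v => lam v * (f : ∀ _ : V, ℂ) (p v)) := by
        rw [← hcoe]; exact (en_eq (S f)).symm
      rw [h1]
      refine le_trans (hen f) ?_
      refine le_trans (mul_le_mul_left hMN _) ?_
      rw [← ENNReal.ofReal_mul (by positivity)]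
      apply ENNReal.ofReal_le_ofReal
      rw [mul_pow]
    have hnorm_eq : ‖S‖ = N := by
      refine le_antisymm (S.opNorm_le_bound hN0 hSle) (ciSup_le fun v => ?_)
      have := S.le_opNorm (ev v)
      rwa [norm_ev, mul_one] at this
    refine ⟨hnorm_eq, ?_⟩
    have hMne : M ≠ ⊤ := (lt_of_le_of_lt (fwd S hS) ENNReal.ofReal_lt_top).ne
    have h2 : ∀ v, ‖S (ev v)‖ ≤ Real.sqrt M.toReal := by
      intro v
      rw [← Real.sqrt_sq (norm_nonneg _)]
      apply Real.sqrt_le_sqrt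
      have h3 : (c v).toReal ≤ M.toReal :=
        ENNReal.toReal_mono hMne (le_iSup c v)
      rwa [← key S hS v, ENNReal.toReal_ofReal (by positivity)] at h3
    have hN2 : N ≤ Real.sqrt M.toReal := ciSup_le h2
    have hfin : ENNReal.ofReal (N ^ 2) ≤ M := by
      have h4 : N ^ 2 ≤ M.toReal := by
        have := pow_le_pow_left₀ hN0 hN2 2
        rwa [Real.sq_sqrt ENNReal.toReal_nonneg] at this
      calc ENNReal.ofReal (N ^ 2) ≤ ENNReal.ofReal M.toReal :=
            ENNReal.ofReal_le_ofReal h4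
        _ = M := ENNReal.ofReal_toReal hMne
    rw [hnorm_eq]
    exact le_antisymm hfin hMN

end ShiftsPaper
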